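/- If λ > 0 and the norm closure of the range of G + λJ is convex, then λ ≥ 4. Equivalently, for every λ with 0 < λ < 4, the closure of R(G + λJ) is not convex; in particular, the closure of R(G + J) is not convex. -/

import Mathlib

noncomputable section
open scoped ENNReal
open Filter

abbrev ell1 := lp (fun _ : ℕ => ℝ) 1
abbrev ellInfty := lp (fun _ : ℕ => ℝ) ∞

/-- The Gossez operator, coordinatewise: (Gx)_m = Σ_{n>m} x_n − Σ_{n<m} x_n. -/
def Gfun (x : ℕ → ℝ) (m : ℕ) : ℝ :=
  (∑' n, if m < n then x n else 0) - ∑ n ∈ Finset.range m, x n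

/-- The all-ones sequence e* ∈ ℓ∞. -/
def eStar : ellInfty :=
  ⟨fun _ => (1 : ℝ), memℓp_infty ⟨1, by rintro r ⟨i, rfl⟩; simp⟩⟩

/-- The m-th standard unit vector e*_m ∈ ℓ∞. -/
def eVec (m : ℕ) : ellInfty := lp.single ∞ m (1 : ℝ)

/-!
For `c = λ⁻¹` both `G (c e_k) + e*` and `G (-c e_k) + e* - 2 e_k` lie in `R(G + λJ)`, since
`c e*` and `c (e* - 2 e_k)` are duality vectors of `± c e_k`; their midpoint is `e* - e_k`, and
averaging these over `k < N` approaches `e*`. So a closed convex set containing the range contains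
`e*`. On the other hand, let `y = Gx + λx*` be `ε`-close to `e*`. Since `(Gx)_m → -Σ xₙ`, the
coordinates `y_m ≥ 1 - ε` force `1 - ε ≤ λ‖x‖ - Σ xₙ`; since `G` is skew, `⟨x, Gx⟩ = 0`, and pairing
`y - e*` with `x` gives `λ‖x‖² - Σ xₙ ≤ ε‖x‖`. Hence `1 - O(ε) ≤ λ(‖x‖ - ‖x‖²) ≤ λ/4`.
-/

open Finset Topology

lemma tsum_eq_zero_of_antisymm {α : Type*} {f : α × α → ℝ} (hf : ∀ a b, f (a, b) = -f (b, a)) :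
    ∑' p, f p = 0 := by
  have hswap : ∑' p : α × α, f p.swap = ∑' p, f p := (Equiv.prodComm α α).tsum_eq f
  have hneg : ∑' p : α × α, f p.swap = -∑' p, f p := by
    rw [← tsum_neg]
    exact tsum_congr fun p => hf p.2 p.1
  linarith

section Pairing

lemma ell1_hasSum_norm (x : ell1) : HasSum (fun n => ‖x n‖) ‖x‖ := by
  simpa using lp.hasSum_norm (p := 1) (by norm_num) x

lemma norm_apply_le_ellInfty_norm (y : ellInfty) (m : ℕ) : ‖y m‖ ≤ ‖y‖ :=
  lp.norm_apply_le_norm ENNReal.top_ne_zero y m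

lemma norm_ell1_mul_ellInfty_le (x : ell1) (y : ellInfty) (m : ℕ) :
    ‖x m * y m‖ ≤ ‖x m‖ * ‖y‖ := by
  rw [norm_mul]
  exact mul_le_mul_of_nonneg_left (norm_apply_le_ellInfty_norm y m) (norm_nonneg _)

lemma summable_ell1_mul_ellInfty (x : ell1) (y : ellInfty) : Summable fun m => x m * y m :=
  .of_norm_bounded ((ell1_hasSum_norm x).summable.mul_right ‖y‖)
    (norm_ell1_mul_ellInfty_le x y)

def ell1Pairing (x : ell1) : ellInfty →ₗ[ℝ] ℝ where
  toFun y := ∑' m, x m * y m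
  map_add' y z := by
    simp only [lp.coeFn_add, Pi.add_apply, mul_add]
    exact (summable_ell1_mul_ellInfty x y).tsum_add (summable_ell1_mul_ellInfty x z)
  map_smul' c y := by
    simp only [lp.coeFn_smul, Pi.smul_apply, smul_eq_mul, RingHom.id_apply, mul_left_comm _ c]
    exact tsum_mul_left

lemma ell1Pairing_apply (x : ell1) (y : ellInfty) : ell1Pairing x y = ∑' m, x m * y m := rfl

lemma abs_ell1Pairing_le (x : ell1) (y : ellInfty) : |ell1Pairing x y| ≤ ‖x‖ * ‖y‖ :=
  tsum_of_norm_bounded ((ell1_hasSum_norm x).mul_right ‖y‖) (norm_ell1_mul_ellInfty_le x y)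

lemma ell1Pairing_eStar (x : ell1) : ell1Pairing x eStar = ∑' n, x n := by
  simp [ell1Pairing_apply, eStar]

lemma ell1Pairing_single (k : ℕ) (c : ℝ) (y : ellInfty) :
    ell1Pairing (lp.single 1 k c) y = c * y k := by
  rw [ell1Pairing_apply, tsum_eq_single k fun m hm => by simp [lp.single_apply, hm]]
  simp [lp.single_apply]

end Pairing

section GossezKernel

lemma Gfun_eq_tsum_sign_mul {x : ℕ → ℝ} (hx : Summable x) (m : ℕ) :
    Gfun x m = ∑' n : ℕ, Real.sign ((n : ℝ) - m) * x n := by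
  have hite : ∀ p : ℕ → Prop, [DecidablePred p] → Summable fun n => if p n then x n else 0 :=
    fun p _ => hx.summable_of_eq_zero_or_self fun n => by by_cases h : p n <;> simp [h]
  have hsign : ∀ n : ℕ, Real.sign ((n : ℝ) - m) * x n
      = (if m < n then x n else 0) - if n < m then x n else 0 := by
    intro n
    rcases lt_trichotomy m n with h | rfl | h
    · simp [h, h.not_gt, Real.sign_of_pos (sub_pos.mpr (Nat.cast_lt.mpr h))]
    · simp
    · simp [h, h.not_gt, Real.sign_of_neg (sub_neg.mpr (Nat.cast_lt.mpr h))]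
  rw [tsum_congr hsign, (hite _).tsum_sub (hite _), Gfun]
  congr 1
  rw [tsum_eq_sum (s := range m) fun n hn => if_neg (by simpa using hn)]
  exact (sum_congr rfl fun n hn => if_pos (mem_range.mp hn)).symm

lemma norm_sign_mul_le (r a : ℝ) : ‖Real.sign r * a‖ ≤ ‖a‖ := by
  rw [norm_mul]
  refine mul_le_of_le_one_left (norm_nonneg _) ?_
  rcases Real.sign_apply_eq r with h | h | h <;> simp [h]

lemma tendsto_Gfun_atTop {x : ℕ → ℝ} (hx : Summable fun n => ‖x n‖) :
    Tendsto (Gfun x) atTop (𝓝 (-∑' n, x n)) := by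
  rw [funext (Gfun_eq_tsum_sign_mul hx.of_norm), ← tsum_neg]
  refine tendsto_tsum_of_dominated_convergence hx (fun n => ?_)
    (.of_forall fun m n => norm_sign_mul_le _ _)
  refine tendsto_const_nhds.congr' ((eventually_gt_atTop n).mono fun m hm => ?_)
  simp [Real.sign_of_neg (sub_neg.mpr (Nat.cast_lt.mpr hm))]

lemma tsum_mul_Gfun_eq_zero {x : ℕ → ℝ} (hx : Summable fun n => ‖x n‖) :
    ∑' m, x m * Gfun x m = 0 := by
  set K : ℕ × ℕ → ℝ := fun p => x p.1 * (Real.sign ((p.2 : ℝ) - p.1) * x p.2)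
  have hK : Summable K := by
    refine .of_norm_bounded (hx.mul_of_nonneg hx (fun _ => norm_nonneg _) fun _ => norm_nonneg _)
      fun p => ?_
    rw [norm_mul]
    exact mul_le_mul_of_nonneg_left (norm_sign_mul_le _ _) (norm_nonneg _)
  calc ∑' m, x m * Gfun x m = ∑' m, ∑' n, K (m, n) := by
        simp_rw [Gfun_eq_tsum_sign_mul hx.of_norm, ← tsum_mul_left]
        rfl
    _ = 0 := by
        rw [← hK.tsum_prod]
        refine tsum_eq_zero_of_antisymm fun a b => ?_
        simp only [K, ← neg_sub (b : ℝ), Real.sign_neg]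
        ring

end GossezKernel

section UnitVectors

lemma eVec_apply (k m : ℕ) : eVec k m = if m = k then 1 else 0 := by
  simp [eVec, lp.single_apply, Pi.single_apply]

lemma eStar_apply (m : ℕ) : eStar m = 1 := rfl

lemma norm_eq_one_of_forall_abs_eq_one {y : ellInfty} (hy : ∀ m, |y m| = 1) : ‖y‖ = 1 :=
  le_antisymm (lp.norm_le_of_forall_le zero_le_one fun m => (hy m).le)
    ((hy 0).symm.le.trans (norm_apply_le_ellInfty_norm y 0))

lemma norm_eStar : ‖eStar‖ = 1 :=
  norm_eq_one_of_forall_abs_eq_one fun _ => abs_one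

lemma eStar_sub_two_smul_eVec_apply (k m : ℕ) :
    (eStar - (2 : ℝ) • eVec k) m = if m = k then -1 else 1 := by
  rw [lp.coeFn_sub, lp.coeFn_smul, Pi.sub_apply, Pi.smul_apply, eStar_apply, eVec_apply]
  split_ifs <;> norm_num

lemma norm_eStar_sub_two_smul_eVec (k : ℕ) : ‖eStar - (2 : ℝ) • eVec k‖ = 1 :=
  norm_eq_one_of_forall_abs_eq_one fun m => by
    rw [eStar_sub_two_smul_eVec_apply]
    split_ifs <;> norm_num

lemma norm_sum_eVec_le_one (s : Finset ℕ) : ‖∑ k ∈ s, eVec k‖ ≤ 1 := by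
  refine lp.norm_le_of_forall_le zero_le_one fun m => ?_
  rw [lp.coeFn_sum, Finset.sum_apply]
  simp only [eVec_apply, sum_ite_eq, Real.norm_eq_abs]
  split_ifs <;> simp

lemma eStar_mem_of_forall_sub_eVec_mem {C : Set ellInfty} (hC : Convex ℝ C) (hCc : IsClosed C)
    (h : ∀ k, eStar - eVec k ∈ C) : eStar ∈ C := by
  set w : ℕ → ellInfty := fun n => ∑ k ∈ range (n + 1), ((n : ℝ) + 1)⁻¹ • (eStar - eVec k)
  have hwC : ∀ n, w n ∈ C := fun n =>
    hC.sum_mem (fun _ _ => by positivity) (by simp [field]) fun k _ => h k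
  have hw : ∀ n, w n - eStar = -(((n : ℝ) + 1)⁻¹ • ∑ k ∈ range (n + 1), eVec k) := by
    intro n
    have hN : ((n + 1 : ℕ) : ℝ) * ((n : ℝ) + 1)⁻¹ = 1 := by
      push_cast
      exact mul_inv_cancel₀ (by positivity)
    simp only [w, smul_sub, sum_sub_distrib, sum_const, card_range, ← smul_sum]
    rw [← Nat.cast_smul_eq_nsmul ℝ, smul_smul, hN, one_smul]
    abel
  have hlim : Tendsto w atTop (𝓝 eStar) := by
    refine tendsto_iff_norm_sub_tendsto_zero.mpr <| squeeze_zero (fun _ => norm_nonneg _)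
      (fun n => ?_) tendsto_one_div_add_atTop_nhds_zero_nat
    rw [hw, norm_neg, norm_smul, one_div, norm_inv, Real.norm_of_nonneg (by positivity)]
    exact mul_le_of_le_one_right (by positivity) (norm_sum_eVec_le_one _)
  exact hCc.mem_of_tendsto hlim (.of_forall hwC)

end UnitVectors

section GossezRange

variable (G : ell1 →L[ℝ] ellInfty) (lam : ℝ)

/-- The range `R(G + λJ)`. -/
def gossezRange : Set ellInfty :=
  {y | ∃ (x : ell1) (xs : ellInfty),
    ‖xs‖ = ‖x‖ ∧ (∑' m, x m * xs m = ‖x‖ ^ 2) ∧ y = G x + lam • xs}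

variable {G lam}

lemma sub_eVec_mem_of_convex_of_subset {C : Set ellInfty} (hlam : 0 < lam) (hC : Convex ℝ C)
    (hRC : gossezRange G lam ⊆ C) (k : ℕ) : eStar - eVec k ∈ C := by
  set c := lam⁻¹
  have hc : 0 < c := inv_pos.mpr hlam
  have hx : ‖(lp.single 1 k c : ell1)‖ = c := by
    rw [lp.norm_single one_pos, Real.norm_of_nonneg hc.le]
  have hplus : G (lp.single 1 k c) + lam • c • eStar ∈ gossezRange G lam := by
    refine ⟨_, _, ?_, ?_, rfl⟩
    · rw [norm_smul, norm_eStar, hx, Real.norm_of_nonneg hc.le, mul_one]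
    · rw [← ell1Pairing_apply, ell1Pairing_single, hx]
      simp [eStar_apply, sq]
  have hminus :
      G (-lp.single 1 k c) + lam • c • (eStar - (2 : ℝ) • eVec k) ∈ gossezRange G lam := by
    refine ⟨_, _, ?_, ?_, rfl⟩
    · rw [norm_smul, norm_eStar_sub_two_smul_eVec, norm_neg, hx, Real.norm_of_nonneg hc.le,
        mul_one]
    · rw [norm_neg, hx, ← ell1Pairing_apply, ← lp.single_neg, ell1Pairing_single]
      rw [lp.coeFn_smul, Pi.smul_apply, eStar_sub_two_smul_eVec_apply, if_pos rfl]
      norm_num [sq]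
  have hmid : (1 / 2 : ℝ) • (G (lp.single 1 k c) + lam • c • eStar)
      + (1 / 2 : ℝ) • (G (-lp.single 1 k c) + lam • c • (eStar - (2 : ℝ) • eVec k))
      = eStar - eVec k := by
    simp only [map_neg, smul_smul, c, mul_inv_cancel₀ hlam.ne', one_smul]
    module
  rw [← hmid]
  exact hC (hRC hplus) (hRC hminus) (by norm_num) (by norm_num) (by norm_num)

end GossezRange

lemma tsum_le_norm_ell1 (x : ell1) : ∑' n, x n ≤ ‖x‖ := by
  simpa [ell1Pairing_eStar, norm_eStar] using (abs_le.mp (abs_ell1Pairing_le x eStar)).2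

lemma mul_four_sub_le {lam ε L S : ℝ} (hlam : 0 ≤ lam) (hε : 0 ≤ ε) (hL : 0 ≤ L) (hSL : S ≤ L)
    (hcoord : 1 - ε ≤ lam * L - S) (hpair : lam * L ^ 2 - S ≤ L * ε) :
    lam * (4 - lam) ≤ 4 * ε * (lam + 1 + ε) := by
  have hlamL : lam * L ≤ 1 + ε := by
    rcases hL.eq_or_lt with rfl | hL
    · linarith
    · exact le_of_mul_le_mul_left (by nlinarith) hL
  have hquad : 1 - ε ≤ lam * L - lam * L ^ 2 + L * ε := by linarith
  nlinarith [mul_le_mul_of_nonneg_left hquad hlam, mul_le_mul_of_nonneg_left hlamL hε,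
    sq_nonneg (lam * L - lam / 2)]

lemma ell1Pairing_self_eq_zero {G : ell1 →L[ℝ] ellInfty}
    (hG : ∀ (x : ell1) (m : ℕ), G x m = Gfun x m) (x : ell1) : ell1Pairing x (G x) = 0 := by
  simp only [ell1Pairing_apply, hG]
  exact tsum_mul_Gfun_eq_zero (ell1_hasSum_norm x).summable

lemma one_sub_norm_sub_eStar_le {G : ell1 →L[ℝ] ellInfty}
    (hG : ∀ (x : ell1) (m : ℕ), G x m = Gfun x m) {lam : ℝ} (hlam : 0 ≤ lam) {x : ell1}
    {xs : ellInfty} (hxs : ‖xs‖ = ‖x‖) :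
    1 - ‖G x + lam • xs - eStar‖ ≤ lam * ‖x‖ - ∑' n, x n := by
  have hcoord : ∀ m, 1 - ‖G x + lam • xs - eStar‖ ≤ Gfun x m + lam * ‖x‖ := by
    intro m
    have hy := (abs_le.mp (norm_apply_le_ellInfty_norm (G x + lam • xs - eStar) m)).1
    have hxs_m := (abs_le.mp ((norm_apply_le_ellInfty_norm xs m).trans hxs.le)).2
    simp only [lp.coeFn_sub, lp.coeFn_add, lp.coeFn_smul, Pi.sub_apply, Pi.add_apply,
      Pi.smul_apply, smul_eq_mul, eStar_apply, hG] at hy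
    nlinarith
  have hlim := (tendsto_Gfun_atTop (ell1_hasSum_norm x).summable).add_const (lam * ‖x‖)
  linarith [ge_of_tendsto' hlim hcoord]

lemma mul_norm_sq_sub_tsum_le {G : ell1 →L[ℝ] ellInfty}
    (hG : ∀ (x : ell1) (m : ℕ), G x m = Gfun x m) {lam : ℝ} {x : ell1} {xs : ellInfty}
    (hpair : ∑' m, x m * xs m = ‖x‖ ^ 2) :
    lam * ‖x‖ ^ 2 - ∑' n, x n ≤ ‖x‖ * ‖G x + lam • xs - eStar‖ := by
  have h := (abs_le.mp (abs_ell1Pairing_le x (G x + lam • xs - eStar))).2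
  rwa [map_sub, map_add, map_smul, ell1Pairing_self_eq_zero hG, ell1Pairing_apply x xs, hpair,
    ell1Pairing_eStar, smul_eq_mul, zero_add] at h

lemma mul_four_sub_le_of_mem_gossezRange {G : ell1 →L[ℝ] ellInfty}
    (hG : ∀ (x : ell1) (m : ℕ), G x m = Gfun x m) {lam : ℝ} (hlam : 0 ≤ lam) {y : ellInfty}
    (hy : y ∈ gossezRange G lam) :
    lam * (4 - lam) ≤ 4 * ‖y - eStar‖ * (lam + 1 + ‖y - eStar‖) := by
  obtain ⟨x, xs, hxs, hpair, rfl⟩ := hy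
  exact mul_four_sub_le hlam (norm_nonneg _) (norm_nonneg x) (tsum_le_norm_ell1 x)
    (one_sub_norm_sub_eStar_le hG hlam hxs) (mul_norm_sq_sub_tsum_le hG hpair)

theorem gossez_closure_convex_imp_four_le
    (G : ell1 →L[ℝ] ellInfty) (hG : ∀ (x : ell1) (m : ℕ), G x m = Gfun x m)
    (lam : ℝ) (hlam : 0 < lam)
    (hconv : Convex ℝ (closure {y : ellInfty | ∃ (x : ell1) (xs : ellInfty),
        ‖xs‖ = ‖x‖ ∧ (∑' m, x m * xs m = ‖x‖ ^ 2) ∧ y = G x + lam • xs})) :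
    4 ≤ lam := by
  have hstar : eStar ∈ closure (gossezRange G lam) :=
    eStar_mem_of_forall_sub_eVec_mem hconv isClosed_closure
      (sub_eVec_mem_of_convex_of_subset hlam hconv subset_closure)
  have hbound : closure (gossezRange G lam)
      ⊆ {y | lam * (4 - lam) ≤ 4 * ‖y - eStar‖ * (lam + 1 + ‖y - eStar‖)} :=
    closure_minimal (fun _ hy => mul_four_sub_le_of_mem_gossezRange hG hlam.le hy)
      (isClosed_le continuous_const (by fun_prop))
  have h := hbound hstar
  simp only [Set.mem_ofPred_eq, sub_self, norm_zero, mul_zero, zero_mul] at h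
  nlinarith
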